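/- Green's theorem for Γ-semigroups: let S be a Γ-semigroup, x,y ∈ S, γ₀ ∈ Γ, and suppose x, y, and xγ₀y all lie in the same H^Γ-class H_x^Γ. Then H_x^Γ is a subgroup of the semigroup S_{γ₀} (the set S with binary operation a·b = aγ₀b). -/
import Mathlib


open FreeSemigroup

section GammaSemigroup

variable {S Γ : Type}

/-- One-step rewriting on words over S ⊕ Γ. -/
inductive GStep (m : S → Γ → S → S) (γ₀ : Γ) : List (S ⊕ Γ) → List (S ⊕ Γ) → Prop
  | gg (u v : List (S ⊕ Γ)) (γ₁ γ₂ : Γ) :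
      GStep m γ₀ (u ++ Sum.inr γ₁ :: Sum.inr γ₂ :: v) (u ++ Sum.inr γ₁ :: v)
  | xgy (u v : List (S ⊕ Γ)) (x : S) (γ : Γ) (y : S) :
      GStep m γ₀ (u ++ Sum.inl x :: Sum.inr γ :: Sum.inl y :: v) (u ++ Sum.inl (m x γ y) :: v)
  | xy (u v : List (S ⊕ Γ)) (x y : S) :
      GStep m γ₀ (u ++ Sum.inl x :: Sum.inl y :: v) (u ++ Sum.inl (m x γ₀ y) :: v)

/-- The defining relations on the free semigroup on S ⊕ Γ. -/
def GRel (m : S → Γ → S → S) (γ₀ : Γ) :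
    FreeSemigroup (S ⊕ Γ) → FreeSemigroup (S ⊕ Γ) → Prop :=
  fun a b =>
    (∃ γ₁ γ₂ : Γ, a = of (Sum.inr γ₁) * of (Sum.inr γ₂) ∧ b = of (Sum.inr γ₁)) ∨
    (∃ (x y : S) (γ : Γ), a = of (Sum.inl x) * of (Sum.inr γ) * of (Sum.inl y) ∧
      b = of (Sum.inl (m x γ y))) ∨
    (∃ x y : S, a = of (Sum.inl x) * of (Sum.inl y) ∧ b = of (Sum.inl (m x γ₀ y)))

/-- The congruence generated by the defining relations. -/
def GCon (m : S → Γ → S → S) (γ₀ : Γ) : Con (FreeSemigroup (S ⊕ Γ)) := conGen (GRel m γ₀)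

/-- The universal semigroup Σ of the Γ-semigroup S. -/
abbrev USem (m : S → Γ → S → S) (γ₀ : Γ) := (GCon m γ₀).Quotient

/-- The canonical map μ : S → Σ. -/
def gmu (m : S → Γ → S → S) (γ₀ : Γ) (x : S) : USem m γ₀ :=
  ((of (Sum.inl x) : FreeSemigroup (S ⊕ Γ)) : (GCon m γ₀).Quotient)

/-- The canonical map Γ → Σ. -/
def giota (m : S → Γ → S → S) (γ₀ : Γ) (γ : Γ) : USem m γ₀ :=
  ((of (Sum.inr γ) : FreeSemigroup (S ⊕ Γ)) : (GCon m γ₀).Quotient)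

/-- Principal left ideal of an element of a semigroup. -/
def pLeft {T : Type} [Semigroup T] (a : T) : Set T := {w | ∃ t : T, w = t * a} ∪ {a}

/-- Principal right ideal of an element of a semigroup. -/
def pRight {T : Type} [Semigroup T] (a : T) : Set T := {w | ∃ t : T, w = a * t} ∪ {a}

/-- Principal left ideal in the Γ-semigroup: SΓx ∪ {x}. -/
def pLeftG (m : S → Γ → S → S) (x : S) : Set S := {y | ∃ (s : S) (γ : Γ), y = m s γ x} ∪ {x}

/-- Principal right ideal in the Γ-semigroup: xΓS ∪ {x}. -/
def pRightG (m : S → Γ → S → S) (x : S) : Set S := {y | ∃ (γ : Γ) (s : S), y = m x γ s} ∪ {x}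

/-- Green's H relation on the Γ-semigroup. -/
def HrelG (m : S → Γ → S → S) (a b : S) : Prop := pLeftG m a = pLeftG m b ∧ pRightG m a = pRightG m b

/-- S_δ is a simple semigroup: its only two-sided ideal is S itself. -/
def SimpleAt (m : S → Γ → S → S) (δ : Γ) : Prop :=
  ∀ J : Set S, J.Nonempty → (∀ t : S, ∀ j ∈ J, m t δ j ∈ J ∧ m j δ t ∈ J) → J = Set.univ

/-- e is an idempotent of S_δ. -/
def IdemAt (m : S → Γ → S → S) (δ : Γ) (e : S) : Prop := m e δ e = e

/-- e is a primitive idempotent of S_δ. -/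
def PrimAt (m : S → Γ → S → S) (δ : Γ) (e : S) : Prop :=
  IdemAt m δ e ∧ ∀ f, IdemAt m δ f → m e δ f = f → m f δ e = f → f = e

/-- S_δ is completely simple. -/
def CSimpleAt (m : S → Γ → S → S) (δ : Γ) : Prop := SimpleAt m δ ∧ ∃ e, PrimAt m δ e

/-- S_δ has no zero element. -/
def NoZeroAt (m : S → Γ → S → S) (δ : Γ) : Prop := ¬ ∃ z : S, ∀ t : S, m z δ t = z ∧ m t δ z = z

/-- L is a left ideal of S_δ. -/
def LIdealAt (m : S → Γ → S → S) (δ : Γ) (L : Set S) : Prop :=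
  L.Nonempty ∧ ∀ t : S, ∀ l ∈ L, m t δ l ∈ L

/-- L is a minimal left ideal of S_δ. -/
def MinLIdealAt (m : S → Γ → S → S) (δ : Γ) (L : Set S) : Prop :=
  LIdealAt m δ L ∧ ∀ L' ⊆ L, LIdealAt m δ L' → L' = L

/-- S_δ is a group. -/
def GroupAt (m : S → Γ → S → S) (δ : Γ) : Prop :=
  ∃ e : S, (∀ a, m e δ a = a ∧ m a δ e = a) ∧ ∀ a, ∃ b, m a δ b = e ∧ m b δ a = e

/-- G is a subgroup (a sub-semigroup that is a group) of the semigroup T. -/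
def IsSubgroupOf {T : Type} [Semigroup T] (G : Set T) : Prop :=
  (∀ a ∈ G, ∀ b ∈ G, a * b ∈ G) ∧
  ∃ e ∈ G, (∀ g ∈ G, e * g = g ∧ g * e = g) ∧ ∀ g ∈ G, ∃ h ∈ G, g * h = e ∧ h * g = e

/-- The set Σ' = Σ \ Γ. -/
def USem' (m : S → Γ → S → S) (γ₀ : Γ) : Set (USem m γ₀) := {w | ¬ ∃ γ : Γ, w = giota m γ₀ γ}

end GammaSemigroup


section GreenAux

variable {S Γ : Type} {m : S → Γ → S → S}

private lemma memL {a b : S} : a ∈ pLeftG m b ↔ (∃ s γ, a = m s γ b) ∨ a = b := Iff.rfl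

private lemma memR {a b : S} : a ∈ pRightG m b ↔ (∃ γ s, a = m b γ s) ∨ a = b := Iff.rfl

private lemma selfL (a : S) : a ∈ pLeftG m a := memL.mpr (Or.inr rfl)

private lemma selfR (a : S) : a ∈ pRightG m a := memR.mpr (Or.inr rfl)

private def msw (m : S → Γ → S → S) : S → Γ → S → S := fun s γ t => m t γ s

private lemma swL (x : S) : pLeftG (msw m) x = pRightG m x := by
  ext w
  simp only [pLeftG, pRightG, msw, Set.mem_union, Set.mem_setOf_eq, Set.mem_singleton_iff]
  rw [exists_comm]

private lemma swR (x : S) : pRightG (msw m) x = pLeftG m x := by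
  ext w
  simp only [pLeftG, pRightG, msw, Set.mem_union, Set.mem_setOf_eq, Set.mem_singleton_iff]
  rw [exists_comm]


variable (assoc : ∀ (a b c : S) (α β : Γ), m (m a α b) β c = m a α (m b β c))

include assoc


private lemma Lsub {a b : S} (h : a ∈ pLeftG m b) : pLeftG m a ⊆ pLeftG m b := by
  rcases memL.mp h with ⟨t, δ, rfl⟩ | rfl
  · rintro c hc
    rcases memL.mp hc with ⟨s, γ, rfl⟩ | rfl
    · exact memL.mpr (Or.inl ⟨m s γ t, δ, (assoc s t b γ δ).symm⟩)
    · exact memL.mpr (Or.inl ⟨t, δ, rfl⟩)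
  · exact fun c hc => hc

private lemma Rsub {a b : S} (h : a ∈ pRightG m b) : pRightG m a ⊆ pRightG m b := by
  rcases memR.mp h with ⟨δ, t, rfl⟩ | rfl
  · rintro c hc
    rcases memR.mp hc with ⟨γ, s, rfl⟩ | rfl
    · exact memR.mpr (Or.inl ⟨δ, m t γ s, assoc b t s δ γ⟩)
    · exact memR.mpr (Or.inl ⟨δ, t, rfl⟩)
  · exact fun c hc => hc

private lemma Leq {a b : S} (h1 : a ∈ pLeftG m b) (h2 : b ∈ pLeftG m a) :
    pLeftG m a = pLeftG m b :=
  Set.Subset.antisymm (Lsub assoc h1) (Lsub assoc h2)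

private lemma Req {a b : S} (h1 : a ∈ pRightG m b) (h2 : b ∈ pRightG m a) :
    pRightG m a = pRightG m b :=
  Set.Subset.antisymm (Rsub assoc h1) (Rsub assoc h2)

private lemma Lcong {a b : S} (h : a ∈ pLeftG m b) (γ : Γ) (u : S) :
    m a γ u ∈ pLeftG m (m b γ u) := by
  rcases memL.mp h with ⟨s, δ, rfl⟩ | rfl
  · exact memL.mpr (Or.inl ⟨s, δ, assoc s b u δ γ⟩)
  · exact selfL _

private lemma Rcong {a b : S} (h : a ∈ pRightG m b) (u : S) (γ : Γ) :
    m u γ a ∈ pRightG m (m u γ b) := by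
  rcases memR.mp h with ⟨δ, t, rfl⟩ | rfl
  · exact memR.mpr (Or.inl ⟨δ, t, (assoc u b t γ δ).symm⟩)
  · exact selfR _

private lemma leftLemma (γ₀ : Γ) (h b : S) (hL : pLeftG m (m h γ₀ b) = pLeftG m b) :
    (∀ c, pRightG m c = pRightG m b →
      pLeftG m (m h γ₀ c) = pLeftG m c ∧ pRightG m (m h γ₀ c) = pRightG m (m h γ₀ b)) ∧
    (∀ d, pRightG m d = pRightG m (m h γ₀ b) → pLeftG m d = pLeftG m b →
      ∃ c, pLeftG m c = pLeftG m b ∧ pRightG m c = pRightG m b ∧ m h γ₀ c = d) := by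
  have hb : b ∈ pLeftG m (m h γ₀ b) := by rw [hL]; exact selfL b
  constructor
  · intro c hcb
    have hcR : c ∈ pRightG m b := by rw [← hcb]; exact selfR c
    have hbR : b ∈ pRightG m c := by rw [hcb]; exact selfR b
    have key : c ∈ pLeftG m (m h γ₀ c) := by
      rcases memL.mp hb with ⟨s, ε, hbe⟩ | hdeg
      · rcases memR.mp hcR with ⟨δ, t, rfl⟩ | rfl
        · refine memL.mpr (Or.inl ⟨s, ε, ?_⟩)
          calc m b δ t = m (m s ε (m h γ₀ b)) δ t := by rw [← hbe]
            _ = m s ε (m (m h γ₀ b) δ t) := assoc s (m h γ₀ b) t ε δ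
            _ = m s ε (m h γ₀ (m b δ t)) := by rw [assoc h b t γ₀ δ]
        · exact memL.mpr (Or.inl ⟨s, ε, hbe⟩)
      · rcases memR.mp hcR with ⟨δ, t, rfl⟩ | rfl
        · refine memL.mpr (Or.inr ?_)
          calc m b δ t = m (m h γ₀ b) δ t := by rw [← hdeg]
            _ = m h γ₀ (m b δ t) := assoc h b t γ₀ δ
        · exact memL.mpr (Or.inr hdeg)
    exact ⟨Leq assoc (memL.mpr (Or.inl ⟨h, γ₀, rfl⟩)) key,
           Req assoc (Rcong assoc hcR h γ₀) (Rcong assoc hbR h γ₀)⟩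
  · intro d hdR hdL
    have hdmem : d ∈ pRightG m (m h γ₀ b) := by rw [← hdR]; exact selfR d
    rcases memL.mp hb with ⟨s, ε, hbe⟩ | hdeg
    · have hrec : m h γ₀ (m s ε d) = d := by
        rcases memR.mp hdmem with ⟨δ, t, hd'⟩ | hd'
        all_goals subst hd'
        · calc m h γ₀ (m s ε (m (m h γ₀ b) δ t))
              = m h γ₀ (m (m s ε (m h γ₀ b)) δ t) := by
                rw [assoc s (m h γ₀ b) t ε δ]
            _ = m h γ₀ (m b δ t) := by rw [← hbe]
            _ = m (m h γ₀ b) δ t := (assoc h b t γ₀ δ).symm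
        · rw [← hbe]
      refine ⟨m s ε d, ?_, ?_, hrec⟩
      · -- pLeftG (m s ε d) = pLeftG b
        have h1 : m s ε d ∈ pLeftG m b := by
          rw [← hdL]; exact memL.mpr (Or.inl ⟨s, ε, rfl⟩)
        have h3 : b ∈ pLeftG m d := by rw [hdL]; exact selfL b
        have h4 : d ∈ pLeftG m (m s ε d) := memL.mpr (Or.inl ⟨h, γ₀, hrec.symm⟩)
        exact Leq assoc h1 (Lsub assoc h4 h3)
      · -- pRightG (m s ε d) = pRightG b
        have h1 : m s ε d ∈ pRightG m (m s ε (m h γ₀ b)) := Rcong assoc hdmem s ε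
        rw [← hbe] at h1
        have h2 : m h γ₀ b ∈ pRightG m d := by rw [hdR]; exact selfR _
        have h3 : m s ε (m h γ₀ b) ∈ pRightG m (m s ε d) := Rcong assoc h2 s ε
        rw [← hbe] at h3
        exact Req assoc h1 h3
    · refine ⟨d, hdL, ?_, ?_⟩
      · rw [hdR, ← hdeg]
      · -- m h γ₀ d = d
        rw [← hdeg] at hdmem
        rcases memR.mp hdmem with ⟨δ, t, hd'⟩ | hd'
        all_goals subst hd'
        · rw [← assoc h b t γ₀ δ, ← hdeg]
        · exact hdeg.symm

private lemma rightLemma (γ₀ : Γ) (h b : S) (hR : pRightG m (m b γ₀ h) = pRightG m b) :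
    (∀ c, pLeftG m c = pLeftG m b →
      pRightG m (m c γ₀ h) = pRightG m c ∧ pLeftG m (m c γ₀ h) = pLeftG m (m b γ₀ h)) ∧
    (∀ d, pLeftG m d = pLeftG m (m b γ₀ h) → pRightG m d = pRightG m b →
      ∃ c, pRightG m c = pRightG m b ∧ pLeftG m c = pLeftG m b ∧ m c γ₀ h = d) := by
  have assoc' : ∀ (a b c : S) (α β : Γ),
      msw m (msw m a α b) β c = msw m a α (msw m b β c) := by
    intro a b c α β
    exact (assoc c b a β α).symm
  have hcond : pLeftG (msw m) (msw m h γ₀ b) = pLeftG (msw m) b := by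
    show pLeftG (msw m) (m b γ₀ h) = _
    rw [swL, swL]; exact hR
  have H := leftLemma (m := msw m) assoc' γ₀ h b hcond
  simp only [swL, swR, msw] at H
  exact H

end GreenAux

theorem stmt (S Γ : Type) [Nonempty S] [Nonempty Γ] (m : S → Γ → S → S)
    (assoc : ∀ (a b c : S) (α β : Γ), m (m a α b) β c = m a α (m b β c)) (γ₀ : Γ) (x y : S)
    (hy : HrelG m y x) (hxy : HrelG m (m x γ₀ y) x) :
    (∀ a ∈ {z : S | HrelG m z x}, ∀ b ∈ {z : S | HrelG m z x}, m a γ₀ b ∈ {z : S | HrelG m z x}) ∧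
    (∃ e ∈ {z : S | HrelG m z x}, (∀ a ∈ {z : S | HrelG m z x}, m e γ₀ a = a ∧ m a γ₀ e = a) ∧
      ∀ a ∈ {z : S | HrelG m z x}, ∃ b ∈ {z : S | HrelG m z x}, m a γ₀ b = e ∧ m b γ₀ a = e)  := by
  have hx : HrelG m x x := ⟨rfl, rfl⟩
  have step1 : ∀ h : S, HrelG m h x → HrelG m (m h γ₀ y) x := by
    intro h hh
    obtain ⟨hR', hL'⟩ := (rightLemma assoc γ₀ y x hxy.2).1 h hh.1
    exact ⟨hL'.trans hxy.1, hR'.trans hh.2⟩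
  have step2 : ∀ h : S, HrelG m h x →
      (∀ c, HrelG m c x → HrelG m (m h γ₀ c) x) ∧
      (∀ d, HrelG m d x → ∃ c, HrelG m c x ∧ m h γ₀ c = d) := by
    intro h hh
    have hhy := step1 h hh
    have hcond : pLeftG m (m h γ₀ y) = pLeftG m y := hhy.1.trans hy.1.symm
    obtain ⟨fwd, surj⟩ := leftLemma assoc γ₀ h y hcond
    constructor
    · intro c hc
      obtain ⟨cL, cR⟩ := fwd c (hc.2.trans hy.2.symm)
      exact ⟨cL.trans hc.1, cR.trans hhy.2⟩
    · intro d hd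
      obtain ⟨c, cL, cR, hcd⟩ := surj d (hd.2.trans hhy.2.symm) (hd.1.trans hy.1.symm)
      exact ⟨c, ⟨cL.trans hy.1, cR.trans hy.2⟩, hcd⟩
  have step3 : ∀ h : S, HrelG m h x →
      ∀ d, HrelG m d x → ∃ c, HrelG m c x ∧ m c γ₀ h = d := by
    intro h hh
    have hxh : HrelG m (m x γ₀ h) x := (step2 x hx).1 h hh
    obtain ⟨fwd, surj⟩ := rightLemma assoc γ₀ h x hxh.2
    intro d hd
    obtain ⟨c, cR, cL, hcd⟩ := surj d (hd.1.trans hxh.1.symm) hd.2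
    exact ⟨c, ⟨cL, cR⟩, hcd⟩
  refine ⟨fun a ha b hb => (step2 a ha).1 b hb, ?_⟩
  obtain ⟨e, he, hxe⟩ := (step2 x hx).2 x hx
  obtain ⟨f, hf, hfx⟩ := step3 x hx x hx
  have rid : ∀ k, HrelG m k x → m k γ₀ e = k := by
    intro k hk
    obtain ⟨t, ht, htx⟩ := step3 x hx k hk
    rw [← htx, assoc t x e γ₀ γ₀, hxe]
  have lid : ∀ k, HrelG m k x → m f γ₀ k = k := by
    intro k hk
    obtain ⟨t, ht, hxt⟩ := (step2 x hx).2 k hk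
    rw [← hxt, ← assoc f x t γ₀ γ₀, hfx]
  have hef : e = f := by
    have h1 := lid e he
    have h2 := rid f hf
    rw [← h1, h2]
  have lidE : ∀ k, HrelG m k x → m e γ₀ k = k := fun k hk => by
    rw [hef]; exact lid k hk
  refine ⟨e, he, fun a ha => ⟨lidE a ha, rid a ha⟩, ?_⟩
  intro a ha
  obtain ⟨binv, hb, hab⟩ := (step2 a ha).2 e he
  obtain ⟨b', hb', hb'a⟩ := step3 a ha e he
  have heq : b' = binv := by
    have h1 : m (m b' γ₀ a) γ₀ binv = m b' γ₀ (m a γ₀ binv) := assoc b' a binv γ₀ γ₀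
    rw [hab, hb'a, lidE binv hb, rid b' hb'] at h1
    exact h1.symm
  exact ⟨binv, hb, hab, heq ▸ hb'a⟩
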